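/- arXiv:2301.07549 — 5 statements merged into one kernel-verified Lean document; each statement's English description precedes it below -/
import Mathlib

section
/- Let S ⊆ ℝⁿ be a strongly E-invex set w.r.t. Ψ and let {h_i}_{i ∈ I} be a family of functions h_i : ℝⁿ → ℝ such that for every s ∈ S the supremum sup_{i ∈ I} h_i(s) exists in ℝ (the family is pointwise bounded above, with I nonempty). Define h : ℝⁿ → ℝ by h(s) = sup_{i ∈ I} h_i(s). If every h_i is quasi strongly E-preinvex w.r.t. Ψ on S, then h is quasi strongly E-preinvex w.r.t. Ψ on S. -/
def SEISet {n : ℕ} (E : EuclideanSpace ℝ (Fin n) → EuclideanSpace ℝ (Fin n))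
    (Ψ : EuclideanSpace ℝ (Fin n) × EuclideanSpace ℝ (Fin n) → EuclideanSpace ℝ (Fin n))
    (S : Set (EuclideanSpace ℝ (Fin n))) : Prop :=
  ∀ s ∈ S, ∀ t ∈ S, ∀ α ∈ Set.Icc (0 : ℝ) 1, ∀ μ ∈ Set.Icc (0 : ℝ) 1,
    α • t + E t + μ • Ψ (α • s + E s, α • t + E t) ∈ S

def QSEP {n : ℕ} (E : EuclideanSpace ℝ (Fin n) → EuclideanSpace ℝ (Fin n))
    (Ψ : EuclideanSpace ℝ (Fin n) × EuclideanSpace ℝ (Fin n) → EuclideanSpace ℝ (Fin n))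
    (S : Set (EuclideanSpace ℝ (Fin n))) (h : EuclideanSpace ℝ (Fin n) → ℝ) : Prop :=
  ∀ s ∈ S, ∀ t ∈ S, ∀ α ∈ Set.Icc (0 : ℝ) 1, ∀ μ ∈ Set.Icc (0 : ℝ) 1,
    h (α • t + E t + μ • Ψ (α • s + E s, α • t + E t)) ≤ max (h (E s)) (h (E t))

theorem stmt_1 {n : ℕ} (E : EuclideanSpace ℝ (Fin n) → EuclideanSpace ℝ (Fin n))
    (Ψ : EuclideanSpace ℝ (Fin n) × EuclideanSpace ℝ (Fin n) → EuclideanSpace ℝ (Fin n))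
    (S : Set (EuclideanSpace ℝ (Fin n))) {I : Type*} [Nonempty I]
    (f : I → EuclideanSpace ℝ (Fin n) → ℝ)
    (hS : SEISet E Ψ S)
    (hbdd : ∀ s ∈ S, BddAbove (Set.range fun i => f i s))
    (hQ : ∀ i, QSEP E Ψ S (f i))
    (h : EuclideanSpace ℝ (Fin n) → ℝ) (hdef : ∀ s, h s = ⨆ i, f i s) :
    QSEP E Ψ S h := by
  intro s hs t ht α hα μ hμ
  have hEs : E s ∈ S := by
    have := hS s hs s hs 0 ⟨le_refl _, zero_le_one⟩ 0 ⟨le_refl _, zero_le_one⟩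
    simpa using this
  have hEt : E t ∈ S := by
    have := hS t ht t ht 0 ⟨le_refl _, zero_le_one⟩ 0 ⟨le_refl _, zero_le_one⟩
    simpa using this
  rw [hdef]
  apply ciSup_le
  intro i
  have hi := hQ i s hs t ht α hα μ hμ
  have h1 : f i (E s) ≤ h (E s) := by
    rw [hdef]; exact le_ciSup (hbdd _ hEs) i
  have h2 : f i (E t) ≤ h (E t) := by
    rw [hdef]; exact le_ciSup (hbdd _ hEt) i
  exact hi.trans (max_le_max h1 h2)
end

section
/- Let h_j : ℝⁿ → ℝ for j = 1,…,m be functions that are quasi strongly E-preinvex w.r.t. Ψ on all of ℝⁿ, and let S = {s ∈ ℝⁿ : h_j(s) ≤ 0 for all j = 1,…,m}. If E(S) ⊆ S, then S is a strongly E-invex set w.r.t. Ψ. -/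
theorem stmt_9 {n m : ℕ} (E : EuclideanSpace ℝ (Fin n) → EuclideanSpace ℝ (Fin n))
    (Ψ : EuclideanSpace ℝ (Fin n) × EuclideanSpace ℝ (Fin n) → EuclideanSpace ℝ (Fin n))
    (h : Fin m → EuclideanSpace ℝ (Fin n) → ℝ)
    (hQ : ∀ j, QSEP E Ψ Set.univ (h j))
    (S : Set (EuclideanSpace ℝ (Fin n)))
    (hSdef : S = {s | ∀ j, h j s ≤ 0})
    (hES : E '' S ⊆ S) :
    SEISet E Ψ S := by
  intro s hs t ht α hα μ hμ
  subst hSdef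
  intro j
  have hEs : E s ∈ {s | ∀ j, h j s ≤ 0} := hES ⟨s, hs, rfl⟩
  have hEt : E t ∈ {s | ∀ j, h j s ≤ 0} := hES ⟨t, ht, rfl⟩
  calc h j (α • t + E t + μ • Ψ (α • s + E s, α • t + E t))
      ≤ max (h j (E s)) (h j (E t)) :=
        hQ j s (Set.mem_univ _) t (Set.mem_univ _) α hα μ hμ
    _ ≤ 0 := max_le (hEs j) (hEt j)
end

section
/- Let h_j : ℝⁿ → ℝ for j = 1,…,m be functions that are quasi strongly E-preinvex w.r.t. Ψ on all of ℝⁿ, and for each j let S_j = {s ∈ ℝⁿ : h_j(s) ≤ 0}. If E(S_j) ⊆ S_j for each j, then the intersection S = ⋂_{j=1}^{m} S_j is a strongly E-invex set w.r.t. Ψ. -/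
theorem stmt_10 {n m : ℕ} (E : EuclideanSpace ℝ (Fin n) → EuclideanSpace ℝ (Fin n))
    (Ψ : EuclideanSpace ℝ (Fin n) × EuclideanSpace ℝ (Fin n) → EuclideanSpace ℝ (Fin n))
    (h : Fin m → EuclideanSpace ℝ (Fin n) → ℝ)
    (hQ : ∀ j, QSEP E Ψ Set.univ (h j))
    (Sj : Fin m → Set (EuclideanSpace ℝ (Fin n)))
    (hSdef : ∀ j, Sj j = {s | h j s ≤ 0})
    (hES : ∀ j, E '' Sj j ⊆ Sj j) :
    SEISet E Ψ (⋂ j, Sj j) := by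
  intro s hs t ht α hα μ hμ
  simp only [Set.mem_iInter] at hs ht ⊢
  intro j
  have hsj := hs j
  have htj := ht j
  have hEs : h j (E s) ≤ 0 := by
    have := hES j ⟨s, hsj, rfl⟩
    rwa [hSdef j] at this
  have hEt : h j (E t) ≤ 0 := by
    have := hES j ⟨t, htj, rfl⟩
    rwa [hSdef j] at this
  have := hQ j s trivial t trivial α hα μ hμ
  rw [hSdef j]
  exact le_trans this (max_le hEs hEt)
end

section
/- Let h₀ : ℝⁿ → ℝ be strictly quasi strongly E-preinvex w.r.t. Ψ on ℝⁿ, let h_j : ℝⁿ → ℝ for j = 1,…,m be quasi strongly E-preinvex w.r.t. Ψ on ℝⁿ, and let X = {s ∈ ℝⁿ : h_j(s) ≤ 0 for all j = 1,…,m} be the feasible set, with E(X) ⊆ X. Suppose s* ∈ E(X) is a local minimum point of the problem of minimizing h₀ over X, i.e., there exists ε > 0 such that h₀(s*) ≤ h₀(t) for every t ∈ X with ‖t − s*‖ < ε. Then s* is a global minimum over E(X): there is no u* ∈ E(X) with u* ≠ s* and h₀(u*) < h₀(s*), i.e., h₀(s*) ≤ h₀(E u) for every u ∈ X. -/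
/-- Strictly quasi strongly E-preinvex on ℝⁿ: QSEP together with strictness of the
inequality whenever `h (E s) ≠ h (E t)` and `μ ∈ (0,1)`. -/
def StrictQSEP {n : ℕ} (E : EuclideanSpace ℝ (Fin n) → EuclideanSpace ℝ (Fin n))
    (Ψ : EuclideanSpace ℝ (Fin n) × EuclideanSpace ℝ (Fin n) → EuclideanSpace ℝ (Fin n))
    (h : EuclideanSpace ℝ (Fin n) → ℝ) : Prop :=
  QSEP E Ψ Set.univ h ∧
    ∀ s t : EuclideanSpace ℝ (Fin n), h (E s) ≠ h (E t) →
      ∀ α ∈ Set.Icc (0 : ℝ) 1, ∀ μ ∈ Set.Ioo (0 : ℝ) 1,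
        h (α • t + E t + μ • Ψ (α • s + E s, α • t + E t)) < max (h (E s)) (h (E t))

/-!
If `h₀ (E u) < h₀ (E x)`, the points `E x + μ • Ψ (E u, E x)` (the case `α = 0` of the
definition) stay in the feasible set, since the constraints are quasi strongly E-preinvex,
and have strictly smaller value than `E x` for `μ ∈ (0, 1)`, by strict preinvexity of `h₀`.
As `μ → 0⁺` they converge to `E x`, contradicting local minimality.
-/

open Filter Topology

theorem isLocalMinOn_of_forall_norm_sub_lt {G : Type*} [SeminormedAddCommGroup G] {f : G → ℝ}
    {S : Set G} {a : G} (h : ∃ ε > (0 : ℝ), ∀ t ∈ S, ‖t - a‖ < ε → f a ≤ f t) :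
    IsLocalMinOn f S a := by
  obtain ⟨ε, hε, hmin⟩ := h
  exact Metric.mem_nhdsWithin_iff.2 ⟨ε, hε, fun t ⟨ht, htS⟩ ↦ hmin t htS (mem_ball_iff_norm.1 ht)⟩

variable {n : ℕ} {E : EuclideanSpace ℝ (Fin n) → EuclideanSpace ℝ (Fin n)}
  {Ψ : EuclideanSpace ℝ (Fin n) × EuclideanSpace ℝ (Fin n) → EuclideanSpace ℝ (Fin n)}

theorem seiSet_setOf_forall_nonpos {ι : Type*} {h : ι → EuclideanSpace ℝ (Fin n) → ℝ}
    (hQ : ∀ j, QSEP E Ψ Set.univ (h j)) (hE : E '' {s | ∀ j, h j s ≤ 0} ⊆ {s | ∀ j, h j s ≤ 0}) :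
    SEISet E Ψ {s | ∀ j, h j s ≤ 0} := by
  intro s hs t ht α hα μ hμ j
  exact (hQ j s trivial t trivial α hα μ hμ).trans
    (max_le (hE ⟨s, hs, rfl⟩ j) (hE ⟨t, ht, rfl⟩ j))

theorem StrictQSEP.le_of_isLocalMinOn {f : EuclideanSpace ℝ (Fin n) → ℝ}
    {S : Set (EuclideanSpace ℝ (Fin n))} (hf : StrictQSEP E Ψ f) (hS : SEISet E Ψ S)
    {x u : EuclideanSpace ℝ (Fin n)} (hx : x ∈ S) (hu : u ∈ S) (hmin : IsLocalMinOn f S (E x)) :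
    f (E x) ≤ f (E u) := by
  by_contra! hlt
  set γ : ℝ → EuclideanSpace ℝ (Fin n) := fun μ ↦
    (0 : ℝ) • x + E x + μ • Ψ ((0 : ℝ) • u + E u, (0 : ℝ) • x + E x)
  have hzero : (0 : ℝ) ∈ Set.Icc (0 : ℝ) 1 := Set.left_mem_Icc.2 zero_le_one
  have hγ_mem : ∀ᶠ μ in 𝓝[>] 0, γ μ ∈ S := by
    filter_upwards [Ioo_mem_nhdsGT zero_lt_one] with μ hμ
    exact hS u hu x hx 0 hzero μ (Set.Ioo_subset_Icc_self hμ)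
  have hγ_lim : Tendsto γ (𝓝 0) (𝓝 (E x)) :=
    (by fun_prop : Continuous γ).tendsto' 0 (E x) (by simp [γ])
  have hγ : Tendsto γ (𝓝[>] 0) (𝓝[S] (E x)) :=
    tendsto_nhdsWithin_iff.2 ⟨hγ_lim.mono_left nhdsWithin_le_nhds, hγ_mem⟩
  obtain ⟨μ, hμ_min, hμ_lt⟩ :=
    ((hγ.eventually hmin).and (Ioo_mem_nhdsGT zero_lt_one)).exists
  have hstrict := hf.2 u x hlt.ne 0 hzero μ hμ_lt
  rw [max_eq_right hlt.le] at hstrict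
  exact hstrict.not_ge hμ_min

theorem stmt_12 {n m : ℕ} (E : EuclideanSpace ℝ (Fin n) → EuclideanSpace ℝ (Fin n))
    (Ψ : EuclideanSpace ℝ (Fin n) × EuclideanSpace ℝ (Fin n) → EuclideanSpace ℝ (Fin n))
    (h₀ : EuclideanSpace ℝ (Fin n) → ℝ) (h : Fin m → EuclideanSpace ℝ (Fin n) → ℝ)
    (hQ0 : StrictQSEP E Ψ h₀)
    (hQ : ∀ j, QSEP E Ψ Set.univ (h j))
    (X : Set (EuclideanSpace ℝ (Fin n)))
    (hXdef : X = {s | ∀ j, h j s ≤ 0})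
    (hEX : E '' X ⊆ X)
    (sstar : EuclideanSpace ℝ (Fin n)) (hs : sstar ∈ E '' X)
    (hloc : ∃ ε > (0 : ℝ), ∀ t ∈ X, ‖t - sstar‖ < ε → h₀ sstar ≤ h₀ t) :
    ∀ u ∈ X, h₀ sstar ≤ h₀ (E u) := by
  obtain ⟨x, hxX, rfl⟩ := hs
  intro u hu
  subst hXdef
  exact hQ0.le_of_isLocalMinOn (seiSet_setOf_forall_nonpos hQ hEX) hxX hu
    (isLocalMinOn_of_forall_norm_sub_lt hloc)
end

section
/- Define h : ℝ → ℝ by h(s) = 1 if s > 0 and h(s) = −s if s ≤ 0; define E : ℝ → ℝ by E(s) = |s|; define Ψ : ℝ × ℝ → ℝ by Ψ(s,t) = 0 if s = t and Ψ(s,t) = −t if s ≠ t. Then h is quasi strongly E-preinvex w.r.t. Ψ on ℝ: for all s, t ∈ ℝ and all α, λ ∈ [0,1], h(α·t + |t| + λ·Ψ(α·s + |s|, α·t + |t|)) ≤ max{h(|s|), h(|t|)}. -/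
noncomputable def hfun (s : ℝ) : ℝ := if s > 0 then 1 else -s

noncomputable def Emap (s : ℝ) : ℝ := |s|

noncomputable def Psi (p : ℝ × ℝ) : ℝ := if p.1 = p.2 then 0 else -p.2

/-! On `[0, ∞)` the function `hfun` is the indicator of `(0, ∞)`, and the first argument of `hfun`
is `x + μ Ψ(·, x)` with `x = α t + |t| ≥ 0`, i.e. either `x` or `(1 - μ) x`. Both lie in `[0, x]`
and vanish when `x` does; and `x > 0` forces `t ≠ 0`, so `hfun` of the argument is at most
`hfun |t|`. -/

lemma hfun_nonneg (y : ℝ) : 0 ≤ hfun y := by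
  unfold hfun
  split_ifs <;> linarith

lemma hfun_le_hfun {y z : ℝ} (hy : 0 ≤ y) (hyz : 0 < y → 0 < z) :
    hfun y ≤ hfun z := by
  rcases hy.lt_or_eq with hy | rfl
  · simp [hfun, hy, hyz hy]
  · simpa [hfun] using hfun_nonneg z

lemma mul_add_abs_nonneg {α : ℝ} (hα : |α| ≤ 1) (t : ℝ) : 0 ≤ α * t + |t| := by
  have : |α * t| ≤ |t| := by
    rw [abs_mul]
    exact mul_le_of_le_one_left (abs_nonneg t) hα
  linarith [neg_abs_le (α * t)]

lemma abs_pos_of_mul_add_abs_pos {α t : ℝ} (h : 0 < α * t + |t|) : 0 < |t| := by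
  rcases eq_or_ne t 0 with rfl | ht
  · simp at h
  · exact abs_pos.mpr ht

lemma add_mul_Psi_eq (x y μ : ℝ) : x + μ * Psi (y, x) = x ∨ x + μ * Psi (y, x) = (1 - μ) * x := by
  unfold Psi
  split_ifs
  · left; ring
  · right; ring

theorem stmt_13 :
    ∀ s t : ℝ, ∀ α ∈ Set.Icc (0 : ℝ) 1, ∀ μ ∈ Set.Icc (0 : ℝ) 1,
      hfun (α * t + Emap t + μ * Psi (α * s + Emap s, α * t + Emap t)) ≤
        max (hfun (Emap s)) (hfun (Emap t)) := by
  rintro s t α ⟨hα0, hα1⟩ μ ⟨-, hμ1⟩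
  set x := α * t + Emap t
  have hx : 0 ≤ x := mul_add_abs_nonneg (abs_le.mpr ⟨by linarith, hα1⟩) t
  have hxt : 0 < x → 0 < Emap t := abs_pos_of_mul_add_abs_pos
  refine le_trans ?_ (le_max_right _ _)
  rcases add_mul_Psi_eq x (α * s + Emap s) μ with h | h <;> rw [h]
  · exact hfun_le_hfun hx hxt
  · have hμ : 0 ≤ 1 - μ := by linarith
    exact hfun_le_hfun (mul_nonneg hμ hx)
      fun hpos => hxt (pos_of_mul_pos_right hpos hμ)
end
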